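/- With Λ = kQ/I_{(r_0,r_1,r_2,k)} as above, a string Λ-module M[S] has endomorphism ring isomorphic to k if and only if, for some vertex i ∈ Z/3, the string representative S is equivalent to the trivial string 1_i, or to the arrow τ_i, or to the path τ_{i+1}τ_i. -/

import Mathlib

/-- Generators of the path algebra of the quiver `Q`: vertex idempotents `e i`,
loops `z i` (the `ζ_i`) and arrows `t i : i → i+1` (the `τ_i`), for `i : ZMod 3`. -/
inductive QGen : Type
  | e : ZMod 3 → QGen
  | z : ZMod 3 → QGen
  | t : ZMod 3 → QGen

variable (k : Type) [Field k]

/-- The generator `e_i` inside the free algebra. -/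
noncomputable def Ee (i : ZMod 3) : FreeAlgebra k QGen := FreeAlgebra.ι k (QGen.e i)
/-- The generator `ζ_i` inside the free algebra. -/
noncomputable def Zz (i : ZMod 3) : FreeAlgebra k QGen := FreeAlgebra.ι k (QGen.z i)
/-- The generator `τ_i` inside the free algebra. -/
noncomputable def Tt (i : ZMod 3) : FreeAlgebra k QGen := FreeAlgebra.ι k (QGen.t i)

/-- The relations presenting `Λ = kQ/I_{(r₀,r₁,r₂,κ)}`: the path-algebra relations on
the idempotents and arrows of `Q` together with the relations
`τ_i ζ_i = 0`, `ζ_{i+1} τ_i = 0` and `ζ_i^{r_i} = (τ_{i+2} τ_{i+1} τ_i)^κ`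
(products composed right-to-left). -/
inductive QRel (r : ZMod 3 → ℕ) (κ : ℕ) : FreeAlgebra k QGen → FreeAlgebra k QGen → Prop
  | idem (i : ZMod 3) : QRel r κ (Ee k i * Ee k i) (Ee k i)
  | orth (i j : ZMod 3) : i ≠ j → QRel r κ (Ee k i * Ee k j) 0
  | sum_idem : QRel r κ (Ee k 0 + Ee k 1 + Ee k 2) 1
  | ez (i : ZMod 3) : QRel r κ (Ee k i * Zz k i) (Zz k i)
  | ze (i : ZMod 3) : QRel r κ (Zz k i * Ee k i) (Zz k i)
  | et (i : ZMod 3) : QRel r κ (Ee k (i + 1) * Tt k i) (Tt k i)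
  | te (i : ZMod 3) : QRel r κ (Tt k i * Ee k i) (Tt k i)
  | tz (i : ZMod 3) : QRel r κ (Tt k i * Zz k i) 0
  | zt (i : ZMod 3) : QRel r κ (Zz k (i + 1) * Tt k i) 0
  | cyc (i : ZMod 3) :
      QRel r κ (Zz k i ^ r i) ((Tt k (i + 2) * Tt k (i + 1) * Tt k i) ^ κ)

/-- The algebra `Λ_{(r₀,r₁,r₂,κ)} = kQ/I_{(r₀,r₁,r₂,κ)}`. -/
noncomputable abbrev Lam (r : ZMod 3 → ℕ) (κ : ℕ) : Type := RingQuot (QRel k r κ)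

/-- The image of `e_i` in `Λ`. -/
noncomputable def eL (r : ZMod 3 → ℕ) (κ : ℕ) (i : ZMod 3) : Lam k r κ :=
  RingQuot.mkAlgHom k (QRel k r κ) (Ee k i)
/-- The image of `ζ_i` in `Λ`. -/
noncomputable def zL (r : ZMod 3 → ℕ) (κ : ℕ) (i : ZMod 3) : Lam k r κ :=
  RingQuot.mkAlgHom k (QRel k r κ) (Zz k i)
/-- The image of `τ_i` in `Λ`. -/
noncomputable def tL (r : ZMod 3 → ℕ) (κ : ℕ) (i : ZMod 3) : Lam k r κ :=
  RingQuot.mkAlgHom k (QRel k r κ) (Tt k i)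

/-- `M` is (isomorphic to) the simple `Λ`-module `S_i` at vertex `i`: it is
one-dimensional over `k`, the idempotent `e_i` acts as the identity and all
arrows act as zero. -/
def IsSimpleAt (r : ZMod 3 → ℕ) (κ : ℕ) (i : ZMod 3) (M : Type) [AddCommGroup M]
    [Module k M] [Module (Lam k r κ) M] [IsScalarTower k (Lam k r κ) M] : Prop :=
  Module.finrank k M = 1 ∧ (∀ x : M, eL k r κ i • x = x) ∧
    (∀ (j : ZMod 3) (x : M), zL k r κ j • x = 0) ∧
    (∀ (j : ZMod 3) (x : M), tL k r κ j • x = 0)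

/-- Letters for strings: the arrows `z i` (`ζ_i`), `t i` (`τ_i`) and their formal
inverses `zi i`, `ti i`. -/
inductive SLetter : Type
  | z : ZMod 3 → SLetter
  | zi : ZMod 3 → SLetter
  | t : ZMod 3 → SLetter
  | ti : ZMod 3 → SLetter
deriving DecidableEq

namespace SLetter

/-- Source vertex of a letter (walks are read left to right). -/
def src : SLetter → ZMod 3
  | z i => i
  | zi i => i
  | t i => i
  | ti i => i + 1

/-- Target vertex of a letter. -/
def tgt : SLetter → ZMod 3
  | z i => i
  | zi i => i
  | t i => i + 1
  | ti i => i

/-- Formal inverse of a letter. -/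
def inv : SLetter → SLetter
  | z i => zi i
  | zi i => z i
  | t i => ti i
  | ti i => t i

end SLetter

/-- The formal inverse of a word (a walk read left to right). -/
def invWord (w : List SLetter) : List SLetter := (w.map SLetter.inv).reverse

/-- The walk of the cycle `c_i = τ_{i+2}τ_{i+1}τ_i` (read left to right). -/
def cycWalk (i : ZMod 3) : List SLetter := [SLetter.t i, SLetter.t (i + 1), SLetter.t (i + 2)]

/-- The set `J` of forbidden (directed) words: `ζ_i^{r_i}`, `τ_iζ_i`, `ζ_{i+1}τ_i`
and `c_i^κ`, written as walks read left to right. -/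
def forbidden (r : ZMod 3 → ℕ) (κ : ℕ) : Set (List SLetter) :=
  {u | ∃ i, u = List.replicate (r i) (SLetter.z i)} ∪
  {u | ∃ i, u = [SLetter.z i, SLetter.t i]} ∪
  {u | ∃ i, u = [SLetter.t i, SLetter.z (i + 1)]} ∪
  {u | ∃ i, u = List.flatten (List.replicate κ (cycWalk i))}

/-- `(v₀, w)` is a string for `Λ_{(r₀,r₁,r₂,κ)}`: a reduced walk starting at the vertex
`v₀` such that no contiguous subword of `w` or of its formal inverse lies in `J`. -/
def IsString (r : ZMod 3 → ℕ) (κ : ℕ) (v₀ : ZMod 3) (w : List SLetter) : Prop :=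
  (∀ a ∈ w.head?, SLetter.src a = v₀) ∧
  List.Chain' (fun a b => SLetter.tgt a = SLetter.src b) w ∧
  List.Chain' (fun a b => b ≠ SLetter.inv a) w ∧
  ∀ u ∈ forbidden r κ, ¬ u <:+: w ∧ ¬ u <:+: invWord w

/-- The end vertex of the walk `(v₀, w)`. -/
def endVtx (v₀ : ZMod 3) (w : List SLetter) : ZMod 3 :=
  (w.map SLetter.tgt).getLastD v₀

/-- Equivalence of strings: two strings are equivalent if they are equal or each is the
formal inverse of the other. -/
def StringEquiv (v₀ : ZMod 3) (w : List SLetter) (v₀' : ZMod 3) (w' : List SLetter) : Prop :=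
  (v₀ = v₀' ∧ w = w') ∨ (v₀' = endVtx v₀ w ∧ w' = invWord w)

/-- The vertex of the `j`-th basis element of the string module of `(v₀, w)`. -/
def vtxAt (v₀ : ZMod 3) (w : List SLetter) : ℕ → ZMod 3
  | 0 => v₀
  | j + 1 => (w.map SLetter.tgt).getD j 0

section StringModule

variable {k} (r : ZMod 3 → ℕ) (κ : ℕ)

variable (v₀ : ZMod 3) (w : List SLetter) (M : Type) [AddCommGroup M] [Module k M]
  [Module (Lam k r κ) M] (b : Module.Basis (Fin (w.length + 1)) k M)

/-- The expected action of the arrow corresponding to the direct letter `a` on the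
`q`-th canonical basis vector of the string module of `(v₀, w)`: it moves forward
along position `q` if the letter there is `a`, and backward along position `q - 1`
if the letter there is the inverse of `a`. -/
noncomputable def expectedSMul (a : SLetter) (q : Fin (w.length + 1)) : M :=
  (if h : q.1 < w.length then
    (if w.get ⟨q.1, h⟩ = a then b ⟨q.1 + 1, by omega⟩ else 0)
   else 0) +
  (if h : 0 < q.1 then
    (if w.get ⟨q.1 - 1, by omega⟩ = SLetter.inv a then b ⟨q.1 - 1, by omega⟩ else 0)
   else 0)

/-- `M`, with canonical `k`-basis `b`, is the string module `M[(v₀, w)]`: the vertex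
idempotents act as the indicated projections, and each arrow acts on the canonical
basis by the canonical string-module formula. -/
def IsStringModule : Prop :=
  (∀ (m : ZMod 3) (q : Fin (w.length + 1)),
      eL k r κ m • b q = if vtxAt v₀ w q.1 = m then b q else 0) ∧
  (∀ (m : ZMod 3) (q : Fin (w.length + 1)),
      zL k r κ m • b q = expectedSMul w M b (SLetter.z m) q) ∧
  (∀ (m : ZMod 3) (q : Fin (w.length + 1)),
      tL k r κ m • b q = expectedSMul w M b (SLetter.t m) q)

end StringModule

/-! ### Auxiliary machinery -/

section Aux

variable {r : ZMod 3 → ℕ} {κ : ℕ}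
variable {M : Type} [AddCommGroup M] [Module k M] [Module (Lam k r κ) M]
  [IsScalarTower k (Lam k r κ) M]

/-- Scalar multiplication by a fixed element of `Λ` as a `k`-linear map. -/
noncomputable def aSmul (a : Lam k r κ) : M →ₗ[k] M where
  toFun x := a • x
  map_add' := smul_add a
  map_smul' c x := by
    haveI := IsScalarTower.to_smulCommClass (R := k) (A := Lam k r κ) (M := M)
    exact (smul_comm c a x).symm

theorem comm_of_basis {n : ℕ} (b : Module.Basis (Fin n) k M) (φ : M →ₗ[k] M) (a : Lam k r κ)
    (h : ∀ s, φ (a • b s) = a • φ (b s)) (x : M) : φ (a • x) = a • φ x := by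
  have h2 : φ ∘ₗ aSmul k a = aSmul k a ∘ₗ φ := b.ext fun s => h s
  exact DFunLike.congr_fun h2 x

theorem lam_comm {n : ℕ} (b : Module.Basis (Fin n) k M) (φ : M →ₗ[k] M)
    (he : ∀ i s, φ (eL k r κ i • b s) = eL k r κ i • φ (b s))
    (hz : ∀ i s, φ (zL k r κ i • b s) = zL k r κ i • φ (b s))
    (ht : ∀ i s, φ (tL k r κ i • b s) = tL k r κ i • φ (b s)) :
    ∀ (a : Lam k r κ) (x : M), φ (a • x) = a • φ x := by
  have he' : ∀ i x, φ (eL k r κ i • x) = eL k r κ i • φ x :=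
    fun i => comm_of_basis k b φ _ (he i)
  have hz' : ∀ i x, φ (zL k r κ i • x) = zL k r κ i • φ x :=
    fun i => comm_of_basis k b φ _ (hz i)
  have ht' : ∀ i x, φ (tL k r κ i • x) = tL k r κ i • φ x :=
    fun i => comm_of_basis k b φ _ (ht i)
  intro a x
  obtain ⟨y, rfl⟩ := RingQuot.mkAlgHom_surjective k (QRel k r κ) a
  refine FreeAlgebra.induction k QGen
    (motive := fun y => ∀ x : M, φ ((RingQuot.mkAlgHom k (QRel k r κ)) y • x)
      = (RingQuot.mkAlgHom k (QRel k r κ)) y • φ x) ?_ ?_ ?_ ?_ y x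
  · intro c x
    rw [AlgHom.commutes, algebraMap_smul, algebraMap_smul, φ.map_smul]
  · intro g x
    cases g with
    | e i => exact he' i x
    | z i => exact hz' i x
    | t i => exact ht' i x
  · intro a b ha hb x
    rw [map_mul, mul_smul, mul_smul, ha, hb]
  · intro a b ha hb x
    rw [map_add, add_smul, add_smul, φ.map_add, ha, hb]

/-- Build a `Λ`-endomorphism from a `k`-linear map commuting with the generators
on a basis. -/
noncomputable def mkEnd {n : ℕ} (b : Module.Basis (Fin n) k M) (φ : M →ₗ[k] M)
    (he : ∀ i s, φ (eL k r κ i • b s) = eL k r κ i • φ (b s))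
    (hz : ∀ i s, φ (zL k r κ i • b s) = zL k r κ i • φ (b s))
    (ht : ∀ i s, φ (tL k r κ i • b s) = tL k r κ i • φ (b s)) :
    Module.End (Lam k r κ) M where
  toFun := φ
  map_add' := φ.map_add
  map_smul' a x := lam_comm k b φ he hz ht a x


/-- Restriction of scalars of a `Λ`-endomorphism. -/
noncomputable def endRes (ψ : Module.End (Lam k r κ) M) : M →ₗ[k] M where
  toFun := ψ
  map_add' := ψ.map_add
  map_smul' c x := by
    simp only [RingHom.id_apply]
    rw [← algebraMap_smul (Lam k r κ) c x, ψ.map_smul, algebraMap_smul]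

/-- Scalar endomorphism. -/
noncomputable def scalEnd (c : k) : Module.End (Lam k r κ) M where
  toFun x := c • x
  map_add' := smul_add c
  map_smul' a x := by
    haveI := IsScalarTower.to_smulCommClass (R := k) (A := Lam k r κ) (M := M)
    exact smul_comm c a x

theorem no_iso_of_nonscalar {n : ℕ} (hk : IsAlgClosed k) (b : Module.Basis (Fin (n + 1)) k M)
    (φ : Module.End (Lam k r κ) M) (hφ : ∀ c : k, ∃ x, φ x ≠ c • x) :
    ¬ Nonempty (Module.End (Lam k r κ) M ≃+* k) := by
  rintro ⟨ε⟩
  haveI := hk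
  haveI : FiniteDimensional k M := Module.Finite.of_basis b
  haveI : Nontrivial M := nontrivial_of_ne (b 0) 0 (b.ne_zero 0)
  obtain ⟨c, hc⟩ := Module.End.exists_eigenvalue (endRes k φ : Module.End k M)
  obtain ⟨v, hv⟩ := hc.exists_hasEigenvector
  set ψ : Module.End (Lam k r κ) M := φ - scalEnd k c with hψ
  have hψv : ψ v = 0 := by
    have h1 : endRes k φ v = c • v := hv.apply_eq_smul
    have : φ v = c • v := h1
    simp [hψ, LinearMap.sub_apply, this, scalEnd]
  have hψ0 : ψ ≠ 0 := by
    obtain ⟨x, hx⟩ := hφ c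
    intro h0
    apply hx
    have : ψ x = 0 := by rw [h0]; rfl
    have h2 : φ x - c • x = 0 := this
    exact sub_eq_zero.mp h2
  have hε : ε ψ ≠ 0 := by
    intro h
    apply hψ0
    have := congrArg ε.symm h
    simpa using this
  have hu : IsUnit ψ := by
    have h1 : IsUnit (ε ψ) := isUnit_iff_ne_zero.2 hε
    have h2 := h1.map ε.symm.toRingHom
    simpa using h2
  obtain ⟨σ, hσ⟩ := hu.exists_left_inv
  have h1 : σ (ψ v) = v := by
    rw [← Module.End.mul_apply, hσ, Module.End.one_apply]
  rw [hψv, map_zero] at h1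
  exact hv.right h1.symm

theorem iso_of_all_scalar {n : ℕ} (b : Module.Basis (Fin (n + 1)) k M)
    (h : ∀ φ : Module.End (Lam k r κ) M, ∃ c : k, ∀ x : M, φ x = c • x) :
    Nonempty (Module.End (Lam k r κ) M ≃+* k) := by
  have key : ∀ φ : Module.End (Lam k r κ) M, ∀ x, φ x = (b.repr (φ (b 0)) 0) • x := by
    intro φ
    obtain ⟨c, hc⟩ := h φ
    have hcc : b.repr (φ (b 0)) 0 = c := by
      rw [hc (b 0), map_smul, b.repr_self]
      simp
    rw [hcc]; exact hc
  refine ⟨{ toFun := fun φ => b.repr (φ (b 0)) 0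
            invFun := fun c => scalEnd k (r := r) (κ := κ) (M := M) c
            left_inv := ?_
            right_inv := ?_
            map_mul' := ?_
            map_add' := ?_ }⟩
  · intro φ
    apply LinearMap.ext
    intro x
    exact ((key φ x).symm : _)
  · intro c
    show b.repr (scalEnd k (r := r) (κ := κ) (M := M) c (b 0)) 0 = c
    have hc : scalEnd k (r := r) (κ := κ) (M := M) c (b 0) = c • b 0 := rfl
    rw [hc, map_smul, b.repr_self]
    simp
  · intro φ ψ
    show b.repr ((φ * ψ) (b 0)) 0 = b.repr (φ (b 0)) 0 * b.repr (ψ (b 0)) 0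
    have h1 : (φ * ψ) (b 0) = (b.repr (φ (b 0)) 0) • ((b.repr (ψ (b 0)) 0) • b 0) := by
      rw [Module.End.mul_apply, key φ (ψ (b 0))]
      rw [← key ψ (b 0)]
    rw [h1, map_smul, map_smul, b.repr_self]
    simp
  · intro φ ψ
    show b.repr ((φ + ψ) (b 0)) 0 = b.repr (φ (b 0)) 0 + b.repr (ψ (b 0)) 0
    rw [LinearMap.add_apply, map_add]
    simp
end Aux

/-! ### String combinatorics -/

namespace SLetter

/-- Whether a letter is a direct letter (an arrow rather than an inverse arrow). -/
def isDir : SLetter → Bool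
  | z _ => true
  | t _ => true
  | _ => false

@[simp] theorem isDir_inv : ∀ a : SLetter, a.inv.isDir = !a.isDir := by
  intro a; cases a <;> rfl

@[simp] theorem inv_inv : ∀ a : SLetter, a.inv.inv = a := by
  intro a; cases a <;> rfl

end SLetter

section Comb

variable {r : ZMod 3 → ℕ} {κ : ℕ} {v₀ : ZMod 3} {w : List SLetter}

theorem vtx_succ (v₀ : ZMod 3) (w : List SLetter) (s : ℕ) (h : s < w.length) :
    vtxAt v₀ w (s + 1) = (w.get ⟨s, h⟩).tgt := by
  show (w.map SLetter.tgt).getD s 0 = _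
  rw [List.getD_eq_getElem _ _ (by simpa using h)]
  simp

theorem hch (hS : IsString r κ v₀ w) (s : ℕ) (h : s + 1 < w.length) :
    (w.get ⟨s, by omega⟩).tgt = (w.get ⟨s + 1, h⟩).src := by
  have := List.isChain_iff_getElem.1 hS.2.1 s (by omega)
  exact this

theorem hred (hS : IsString r κ v₀ w) (s : ℕ) (h : s + 1 < w.length) :
    w.get ⟨s + 1, h⟩ ≠ (w.get ⟨s, by omega⟩).inv := by
  have := List.isChain_iff_getElem.1 hS.2.2.1 s (by omega)
  exact this

theorem src_get (hS : IsString r κ v₀ w) (s : ℕ) (h : s < w.length) :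
    (w.get ⟨s, h⟩).src = vtxAt v₀ w s := by
  cases s with
  | zero =>
    have hne : w ≠ [] := by intro h0; rw [h0] at h; simp at h
    have h1 : w.head? = some (w.get ⟨0, h⟩) := by
      cases w with
      | nil => simp at h
      | cons a l => rfl
    exact hS.1 _ (by rw [h1]; exact Option.mem_def.2 rfl)
  | succ m =>
    rw [vtx_succ v₀ w m (by omega)]
    exact (hch hS m h).symm

theorem pair_infix {a c : SLetter} (s : ℕ) (h : s + 1 < w.length)
    (ha : w.get ⟨s, by omega⟩ = a) (hb : w.get ⟨s + 1, h⟩ = c) : [a, c] <:+: w := by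
  have h1 : List.drop s w = a :: c :: List.drop (s + 2) w := by
    rw [List.drop_eq_getElem_cons (by omega : s < w.length),
        List.drop_eq_getElem_cons (by omega : s + 1 < w.length)]
    rw [show w[s] = a from ha, show w[s+1] = c from hb]
  have h2 : [a, c] <:+: List.drop s w := by
    rw [h1]; exact ⟨[], List.drop (s + 2) w, by simp⟩
  exact h2.trans (List.drop_suffix s w).isInfix

theorem infix_invWord {u : List SLetter} (h : u <:+: w) : invWord u <:+: invWord w :=
  List.reverse_infix.2 (h.map SLetter.inv)

theorem no_zt (hS : IsString r κ v₀ w) (j : ZMod 3) (s : ℕ) (h : s + 1 < w.length)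
    (ha : w.get ⟨s, by omega⟩ = .z j) (hb : w.get ⟨s + 1, h⟩ = .t j) : False := by
  have hmem : [SLetter.z j, SLetter.t j] ∈ forbidden r κ :=
    Or.inl (Or.inl (Or.inr ⟨j, rfl⟩))
  exact (hS.2.2.2 _ hmem).1 (pair_infix s h ha hb)

theorem no_tz (hS : IsString r κ v₀ w) (j : ZMod 3) (s : ℕ) (h : s + 1 < w.length)
    (ha : w.get ⟨s, by omega⟩ = .t j) (hb : w.get ⟨s + 1, h⟩ = .z (j + 1)) : False := by
  have hmem : [SLetter.t j, SLetter.z (j + 1)] ∈ forbidden r κ :=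
    Or.inl (Or.inr ⟨j, rfl⟩)
  exact (hS.2.2.2 _ hmem).1 (pair_infix s h ha hb)

theorem no_tizi (hS : IsString r κ v₀ w) (j : ZMod 3) (s : ℕ) (h : s + 1 < w.length)
    (ha : w.get ⟨s, by omega⟩ = .ti j) (hb : w.get ⟨s + 1, h⟩ = .zi j) : False := by
  have hmem : [SLetter.z j, SLetter.t j] ∈ forbidden r κ :=
    Or.inl (Or.inl (Or.inr ⟨j, rfl⟩))
  apply (hS.2.2.2 _ hmem).2
  have h1 : [SLetter.ti j, SLetter.zi j] <:+: w := pair_infix s h ha hb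
  have h2 := infix_invWord h1
  simpa [invWord, SLetter.inv] using h2

theorem no_ziti (hS : IsString r κ v₀ w) (j : ZMod 3) (s : ℕ) (h : s + 1 < w.length)
    (ha : w.get ⟨s, by omega⟩ = .zi (j + 1)) (hb : w.get ⟨s + 1, h⟩ = .ti j) : False := by
  have hmem : [SLetter.t j, SLetter.z (j + 1)] ∈ forbidden r κ :=
    Or.inl (Or.inr ⟨j, rfl⟩)
  apply (hS.2.2.2 _ hmem).2
  have h1 : [SLetter.zi (j + 1), SLetter.ti j] <:+: w := pair_infix s h ha hb
  have h2 := infix_invWord h1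
  simpa [invWord, SLetter.inv] using h2

end Comb

section Comb2

variable {r : ZMod 3 → ℕ} {κ : ℕ} {v₀ : ZMod 3} {w : List SLetter}

theorem after_z (hS : IsString r κ v₀ w) (j : ZMod 3) (s : ℕ) (h : s + 1 < w.length)
    (hz : w.get ⟨s, by omega⟩ = .z j) (hne : w.get ⟨s + 1, h⟩ ≠ .z j) :
    (w.get ⟨s + 1, h⟩).isDir = false := by
  have hc := hch hS s h
  have hr := hred hS s h
  rw [hz] at hc hr
  simp only [SLetter.tgt] at hc
  rcases e : w.get ⟨s + 1, h⟩ with m | m | m | m <;> rw [e] at hc hr <;>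
    simp only [SLetter.src, SLetter.inv] at hc hr ⊢
  · exact absurd (by rw [e, hc]) hne
  · exact absurd (by rw [hc]) hr
  · exact absurd (no_zt hS j s h hz (by rw [e, ← hc])) not_false
  · rfl

theorem before_z (hS : IsString r κ v₀ w) (j : ZMod 3) (s : ℕ) (h : s + 1 < w.length)
    (hz : w.get ⟨s + 1, h⟩ = .z j) (hne : w.get ⟨s, by omega⟩ ≠ .z j) :
    (w.get ⟨s, by omega⟩).isDir = false := by
  have hc := hch hS s h
  have hr := hred hS s h
  rw [hz] at hc hr
  simp only [SLetter.src] at hc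
  have hs : s < w.length := by omega
  rcases e : w.get ⟨s, hs⟩ with m | m | m | m <;> rw [e] at hc hr <;>
    simp only [SLetter.tgt, SLetter.inv] at hc hr ⊢
  · exact absurd (by rw [e, hc]) hne
  · exact absurd (by rw [hc]) hr
  · exact absurd (no_tz hS m s h e (by rw [hz, hc])) not_false
  · rfl

theorem after_zi (hS : IsString r κ v₀ w) (j : ZMod 3) (s : ℕ) (h : s + 1 < w.length)
    (hz : w.get ⟨s, by omega⟩ = .zi j) (hne : w.get ⟨s + 1, h⟩ ≠ .zi j) :
    (w.get ⟨s + 1, h⟩).isDir = true := by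
  have hc := hch hS s h
  have hr := hred hS s h
  rw [hz] at hc hr
  simp only [SLetter.tgt] at hc
  rcases e : w.get ⟨s + 1, h⟩ with m | m | m | m <;> rw [e] at hc hr <;>
    simp only [SLetter.src, SLetter.inv] at hc hr ⊢
  · exact absurd (by rw [hc]) hr
  · exact absurd (by rw [e, hc]) hne
  · rfl
  · -- w[s+1] = ti m with m + 1 = j
    exact absurd (no_ziti hS m s h (by rw [hz, hc]) e) not_false

theorem before_zi (hS : IsString r κ v₀ w) (j : ZMod 3) (s : ℕ) (h : s + 1 < w.length)
    (hz : w.get ⟨s + 1, h⟩ = .zi j) (hne : w.get ⟨s, by omega⟩ ≠ .zi j) :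
    (w.get ⟨s, by omega⟩).isDir = true := by
  have hc := hch hS s h
  have hr := hred hS s h
  rw [hz] at hc hr
  simp only [SLetter.src] at hc
  have hs : s < w.length := by omega
  rcases e : w.get ⟨s, hs⟩ with m | m | m | m <;> rw [e] at hc hr <;>
    simp only [SLetter.tgt, SLetter.inv] at hc hr ⊢
  · exact absurd (by rw [hc]) hr
  · exact absurd (by rw [e, hc]) hne
  · rfl
  · exact absurd (no_tizi hS m s h e (by rw [hz, hc])) not_false

theorem exists_run_start (a₀ : SLetter) : ∀ s (h : s < w.length), w.get ⟨s, h⟩ = a₀ →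
    ∃ p, ∃ hp : p < w.length, p ≤ s ∧ w.get ⟨p, hp⟩ = a₀ ∧
      (p = 0 ∨ ∀ h' : p - 1 < w.length, w.get ⟨p - 1, h'⟩ ≠ a₀) := by
  intro s
  induction s with
  | zero => exact fun h ha => ⟨0, h, le_refl _, ha, Or.inl rfl⟩
  | succ m ih =>
    intro h ha
    by_cases hm : w.get ⟨m, by omega⟩ = a₀
    · obtain ⟨p, hp, hps, h1, h2⟩ := ih (by omega) hm
      exact ⟨p, hp, by omega, h1, h2⟩
    · refine ⟨m + 1, h, le_refl _, ha, Or.inr fun h' => ?_⟩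
      simpa using hm

theorem exists_run_end (a₀ : SLetter) (s : ℕ) (h : s < w.length) (ha : w.get ⟨s, h⟩ = a₀) :
    ∃ p, ∃ hp : p < w.length, s ≤ p ∧ w.get ⟨p, hp⟩ = a₀ ∧
      (p + 1 = w.length ∨ ∀ h' : p + 1 < w.length, w.get ⟨p + 1, h'⟩ ≠ a₀) := by
  have main : ∀ d s (h : s < w.length), w.length - s ≤ d → w.get ⟨s, h⟩ = a₀ →
      ∃ p, ∃ hp : p < w.length, s ≤ p ∧ w.get ⟨p, hp⟩ = a₀ ∧
        (p + 1 = w.length ∨ ∀ h' : p + 1 < w.length, w.get ⟨p + 1, h'⟩ ≠ a₀) := by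
    intro d
    induction d with
    | zero => intro s h hd; omega
    | succ d ih =>
      intro s h hd ha
      by_cases h1 : s + 1 < w.length
      · by_cases h2 : w.get ⟨s + 1, h1⟩ = a₀
        · obtain ⟨p, hp, hsp, g1, g2⟩ := ih (s + 1) h1 (by omega) h2
          exact ⟨p, hp, by omega, g1, g2⟩
        · exact ⟨s, h, le_refl _, ha, Or.inr fun h' => h2⟩
      · exact ⟨s, h, le_refl _, ha, Or.inl (by omega)⟩
  exact main (w.length - s) s h (le_refl _) ha

end Comb2

section CaseA

variable {r : ZMod 3 → ℕ} {κ : ℕ} {v₀ : ZMod 3} {w : List SLetter}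

/-- From any occurrence of a loop letter `ζ_j` or `ζ_j⁻¹`, produce a "top" position `p`
and a "socle" position `q` at the same vertex. -/
theorem caseA_comb (hS : IsString r κ v₀ w) (j : ZMod 3) (s : ℕ) (hs : s < w.length)
    (hz : w.get ⟨s, hs⟩ = .z j ∨ w.get ⟨s, hs⟩ = .zi j) :
    ∃ p q : Fin (w.length + 1), p ≠ q ∧ vtxAt v₀ w p.1 = vtxAt v₀ w q.1 ∧
      (∀ (u : ℕ) (h : u < w.length), u + 1 = p.1 → (w.get ⟨u, h⟩).isDir = false) ∧
      (∀ h : p.1 < w.length, (w.get ⟨p.1, h⟩).isDir = true) ∧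
      (∀ h : q.1 < w.length, (w.get ⟨q.1, h⟩).isDir = false) ∧
      (∀ (u : ℕ) (h : u < w.length), u + 1 = q.1 → (w.get ⟨u, h⟩).isDir = true) := by
  rcases hz with hz | hz
  · -- ζ_j run: top at run start, socle right after run end
    obtain ⟨p₀, hp₀, hps, hpz, hpb⟩ := exists_run_start (SLetter.z j) s hs hz
    obtain ⟨e₀, he₀, hse, hez, heb⟩ := exists_run_end (SLetter.z j) s hs hz
    refine ⟨⟨p₀, by omega⟩, ⟨e₀ + 1, by omega⟩, ?_, ?_, ?_, ?_, ?_, ?_⟩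
    · intro hc
      have h1 : p₀ = e₀ + 1 := congrArg Fin.val hc
      omega
    · show vtxAt v₀ w p₀ = vtxAt v₀ w (e₀ + 1)
      rw [← src_get hS p₀ hp₀, vtx_succ v₀ w e₀ he₀, hpz, hez]
      rfl
    · intro u h hu
      have hup : u + 1 = p₀ := hu
      have hu' : u + 1 < w.length := by omega
      rcases hpb with h0 | hb
      · omega
      · have h1 : w.get ⟨u, h⟩ ≠ SLetter.z j := by
          have := hb (by omega : p₀ - 1 < w.length)
          have he2 : p₀ - 1 = u := by omega
          simpa [he2] using this
        have h2 : w.get ⟨u + 1, hu'⟩ = SLetter.z j := by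
          simpa [hup] using hpz
        exact before_z hS j u hu' h2 h1
    · intro h
      simpa [SLetter.isDir] using congrArg SLetter.isDir hpz
    · intro h
      have h1 : e₀ + 1 < w.length := h
      rcases heb with h0 | hb
      · omega
      · exact after_z hS j e₀ h1 hez (hb h1)
    · intro u h hu
      have hup : u + 1 = e₀ + 1 := hu
      have : u = e₀ := by omega
      subst this
      simpa [SLetter.isDir] using congrArg SLetter.isDir hez
  · -- ζ_j⁻¹ run: socle at run start, top right after run end
    obtain ⟨p₀, hp₀, hps, hpz, hpb⟩ := exists_run_start (SLetter.zi j) s hs hz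
    obtain ⟨e₀, he₀, hse, hez, heb⟩ := exists_run_end (SLetter.zi j) s hs hz
    refine ⟨⟨e₀ + 1, by omega⟩, ⟨p₀, by omega⟩, ?_, ?_, ?_, ?_, ?_, ?_⟩
    · intro hc
      have h1 : e₀ + 1 = p₀ := congrArg Fin.val hc
      omega
    · show vtxAt v₀ w (e₀ + 1) = vtxAt v₀ w p₀
      rw [← src_get hS p₀ hp₀, vtx_succ v₀ w e₀ he₀, hpz, hez]
      rfl
    · intro u h hu
      have hup : u + 1 = e₀ + 1 := hu
      have : u = e₀ := by omega
      subst this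
      simpa [SLetter.isDir] using congrArg SLetter.isDir hez
    · intro h
      have h1 : e₀ + 1 < w.length := h
      rcases heb with h0 | hb
      · omega
      · exact after_zi hS j e₀ h1 hez (hb h1)
    · intro h
      simpa [SLetter.isDir] using congrArg SLetter.isDir hpz
    · intro u h hu
      have hup : u + 1 = p₀ := hu
      have hu' : u + 1 < w.length := by omega
      rcases hpb with h0 | hb
      · omega
      · have h1 : w.get ⟨u, h⟩ ≠ SLetter.zi j := by
          have := hb (by omega : p₀ - 1 < w.length)
          have he2 : p₀ - 1 = u := by omega
          simpa [he2] using this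
        have h2 : w.get ⟨u + 1, hu'⟩ = SLetter.zi j := by
          simpa [hup] using hpz
        exact before_zi hS j u hu' h2 h1
end CaseA

section EndoA

variable {r : ZMod 3 → ℕ} {κ : ℕ} {v₀ : ZMod 3} {w : List SLetter}
variable {M : Type} [AddCommGroup M] [Module k M] [Module (Lam k r κ) M]
  [IsScalarTower k (Lam k r κ) M]

theorem caseA_endo (b : Module.Basis (Fin (w.length + 1)) k M)
    (hM : IsStringModule r κ v₀ w M b)
    (p q : Fin (w.length + 1)) (hpq : p ≠ q) (hv : vtxAt v₀ w p.1 = vtxAt v₀ w q.1)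
    (htop1 : ∀ (u : ℕ) (h : u < w.length), u + 1 = p.1 → (w.get ⟨u, h⟩).isDir = false)
    (htop2 : ∀ h : p.1 < w.length, (w.get ⟨p.1, h⟩).isDir = true)
    (hsoc1 : ∀ h : q.1 < w.length, (w.get ⟨q.1, h⟩).isDir = false)
    (hsoc2 : ∀ (u : ℕ) (h : u < w.length), u + 1 = q.1 → (w.get ⟨u, h⟩).isDir = true) :
    ∃ φ : Module.End (Lam k r κ) M, ∀ c : k, ∃ x, φ x ≠ c • x := by
  classical
  set f : Fin (w.length + 1) → M := fun s => if s = p then b q else 0 with hf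
  set φ₀ : M →ₗ[k] M := b.constr k f with hφ₀
  have hφb : ∀ s, φ₀ (b s) = f s := fun s => b.constr_basis k f s
  have socle0 : ∀ (aa : Lam k r κ) (a₀ : SLetter), a₀.isDir = true →
      (∀ s, aa • b s = expectedSMul w M b a₀ s) → aa • b q = 0 := by
    intro aa a₀ hdir hact
    rw [hact q, expectedSMul]
    have hB : (if h : 0 < q.1 then
        (if w.get ⟨q.1 - 1, by have := q.isLt; omega⟩ = SLetter.inv a₀ then
          b ⟨q.1 - 1, by have := q.isLt; omega⟩ else 0) else 0) = 0 := by
      by_cases h2 : 0 < q.1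
      · rw [dif_pos h2]
        have hy : ¬(w.get ⟨q.1 - 1, by have := q.isLt; omega⟩ = SLetter.inv a₀) := by
          intro hy
          have h3 := hsoc2 (q.1 - 1) (by have := q.isLt; omega) (by omega)
          rw [hy, SLetter.isDir_inv, hdir] at h3
          simp at h3
        rw [if_neg hy]
      · rw [dif_neg h2]
    by_cases h1 : q.1 < w.length
    · rw [dif_pos h1]
      have hx : ¬(w.get ⟨q.1, h1⟩ = a₀) := by
        intro hx
        have h3 := hsoc1 h1
        rw [hx, hdir] at h3
        simp at h3
      rw [if_neg hx, hB, add_zero]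
    · rw [dif_neg h1, hB, add_zero]
  have keyArrow : ∀ (aa : Lam k r κ) (a₀ : SLetter), a₀.isDir = true →
      (∀ s, aa • b s = expectedSMul w M b a₀ s) →
      ∀ s, φ₀ (aa • b s) = aa • φ₀ (b s) := by
    intro aa a₀ hdir hact s
    have hR : aa • φ₀ (b s) = 0 := by
      rw [hφb s, hf]
      simp only
      by_cases hsp : s = p
      · rw [if_pos hsp]; exact socle0 aa a₀ hdir hact
      · rw [if_neg hsp]; exact smul_zero aa
    rw [hR, hact s, expectedSMul, map_add]
    have hB : φ₀ (if h : 0 < s.1 then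
        (if w.get ⟨s.1 - 1, by have := s.isLt; omega⟩ = SLetter.inv a₀ then
          b ⟨s.1 - 1, by have := s.isLt; omega⟩ else 0) else 0) = 0 := by
      by_cases h2 : 0 < s.1
      · rw [dif_pos h2]
        by_cases hy : w.get ⟨s.1 - 1, by have := s.isLt; omega⟩ = SLetter.inv a₀
        · rw [if_pos hy, hφb, hf]
          simp only
          have hnp : ¬((⟨s.1 - 1, by have := s.isLt; omega⟩ : Fin (w.length + 1)) = p) := by
            intro he
            have hval : s.1 - 1 = p.1 := congrArg Fin.val he
            have hlt : p.1 < w.length := by have := s.isLt; omega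
            have h3 := htop2 hlt
            have hgg : w.get ⟨p.1, hlt⟩ = SLetter.inv a₀ := by
              simp only [← hval]
              exact hy
            rw [hgg, SLetter.isDir_inv, hdir] at h3
            simp at h3
          rw [if_neg hnp]
        · rw [if_neg hy, map_zero]
      · rw [dif_neg h2, map_zero]
    have hA : φ₀ (if h : s.1 < w.length then
        (if w.get ⟨s.1, h⟩ = a₀ then b ⟨s.1 + 1, by omega⟩ else 0) else 0) = 0 := by
      by_cases h1 : s.1 < w.length
      · rw [dif_pos h1]
        by_cases hla : w.get ⟨s.1, h1⟩ = a₀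
        · rw [if_pos hla, hφb, hf]
          simp only
          have hnp : ¬((⟨s.1 + 1, by omega⟩ : Fin (w.length + 1)) = p) := by
            intro he
            have hval : s.1 + 1 = p.1 := congrArg Fin.val he
            have h3 := htop1 s.1 h1 hval
            rw [hla, hdir] at h3
            simp at h3
          rw [if_neg hnp]
        · rw [if_neg hla, map_zero]
      · rw [dif_neg h1, map_zero]
    rw [hA, hB, add_zero]
  have keyE : ∀ (m : ZMod 3) (s : Fin (w.length + 1)),
      φ₀ (eL k r κ m • b s) = eL k r κ m • φ₀ (b s) := by
    intro m s
    rw [hM.1 m s]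
    by_cases hvm : vtxAt v₀ w s.1 = m
    · rw [if_pos hvm, hφb s, hf]
      simp only
      by_cases hsp : s = p
      · rw [if_pos hsp, hM.1 m q]
        have e1 : vtxAt v₀ w q.1 = m := by
          rw [← hv, congrArg Fin.val hsp.symm]
          exact hvm
        rw [if_pos e1]
      · rw [if_neg hsp, smul_zero]
    · rw [if_neg hvm, map_zero, hφb s, hf]
      simp only
      by_cases hsp : s = p
      · rw [if_pos hsp, hM.1 m q]
        have e1 : ¬(vtxAt v₀ w q.1 = m) := by
          rw [← hv, congrArg Fin.val hsp.symm]
          exact hvm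
        rw [if_neg e1]
      · rw [if_neg hsp, smul_zero]
  refine ⟨mkEnd k b φ₀ keyE
    (fun m s => keyArrow _ (SLetter.z m) rfl (hM.2.1 m) s)
    (fun m s => keyArrow _ (SLetter.t m) rfl (hM.2.2 m) s), ?_⟩
  intro c
  by_cases hc : c = 0
  · refine ⟨b p, ?_⟩
    show φ₀ (b p) ≠ c • b p
    rw [hφb, hf, hc]
    simp only [if_pos rfl, zero_smul]
    exact b.ne_zero q
  · refine ⟨b q, ?_⟩
    show φ₀ (b q) ≠ c • b q
    rw [hφb, hf]
    simp only [if_neg (Ne.symm hpq)]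
    intro h0
    exact (smul_ne_zero hc (b.ne_zero q)) h0.symm

end EndoA

section EndoB

variable {r : ZMod 3 → ℕ} {κ : ℕ} {v₀ : ZMod 3} {w : List SLetter}
variable {M : Type} [AddCommGroup M] [Module k M] [Module (Lam k r κ) M]
  [IsScalarTower k (Lam k r κ) M]

theorem caseB_endo (b : Module.Basis (Fin (w.length + 1)) k M)
    (hM : IsStringModule r κ v₀ w M b) (hn : 3 ≤ w.length)
    (hlet : ∀ (s : ℕ) (h : s < w.length), w.get ⟨s, h⟩ = SLetter.t (vtxAt v₀ w s)) :
    ∃ φ : Module.End (Lam k r κ) M, ∀ c : k, ∃ x, φ x ≠ c • x := by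
  classical
  have hstep : ∀ (s : ℕ) (h : s < w.length),
      vtxAt v₀ w (s + 1) = vtxAt v₀ w s + 1 := by
    intro s h
    rw [vtx_succ v₀ w s h, hlet s h]
    rfl
  have e3 : ∀ a : ZMod 3, a + 1 + 1 + 1 = a := by decide
  have h3 : ∀ s, s + 3 ≤ w.length → vtxAt v₀ w (s + 3) = vtxAt v₀ w s := by
    intro s hs3
    have g1 : vtxAt v₀ w (s + 3) = vtxAt v₀ w (s + 2 + 1) :=
      congrArg (vtxAt v₀ w) (by omega)
    rw [g1, hstep (s + 2) (by omega), hstep (s + 1) (by omega), hstep s (by omega)]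
    exact e3 _
  have hsame : ∀ (s : ℕ) (h : s + 3 < w.length),
      w.get ⟨s + 3, h⟩ = w.get ⟨s, by omega⟩ := by
    intro s h
    rw [hlet (s + 3) h, hlet s (by omega), h3 s (by omega)]
  set f : Fin (w.length + 1) → M := fun s =>
    if h : s.1 + 3 ≤ w.length then b ⟨s.1 + 3, by omega⟩ else 0 with hf
  set φ₀ : M →ₗ[k] M := b.constr k f with hφ₀
  have hφb : ∀ s, φ₀ (b s) = f s := fun s => b.constr_basis k f s
  have hzb : ∀ (m : ZMod 3) (s : Fin (w.length + 1)), zL k r κ m • b s = 0 := by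
    intro m s
    rw [hM.2.1 m s, expectedSMul]
    have hB : (if h : 0 < s.1 then
        (if w.get ⟨s.1 - 1, by have := s.isLt; omega⟩ = SLetter.inv (SLetter.z m) then
          b ⟨s.1 - 1, by have := s.isLt; omega⟩ else 0) else 0) = 0 := by
      by_cases h2 : 0 < s.1
      · rw [dif_pos h2, if_neg]
        rw [hlet (s.1 - 1) (by have := s.isLt; omega)]
        simp [SLetter.inv]
      · rw [dif_neg h2]
    rw [hB, add_zero]
    by_cases h1 : s.1 < w.length
    · rw [dif_pos h1, if_neg]
      rw [hlet s.1 h1]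
      simp
    · rw [dif_neg h1]
  have htb : ∀ (m : ZMod 3) (s : Fin (w.length + 1)), tL k r κ m • b s =
      (if h : s.1 < w.length then
        (if w.get ⟨s.1, h⟩ = SLetter.t m then b ⟨s.1 + 1, by omega⟩ else 0) else 0) := by
    intro m s
    rw [hM.2.2 m s, expectedSMul]
    have hB : (if h : 0 < s.1 then
        (if w.get ⟨s.1 - 1, by have := s.isLt; omega⟩ = SLetter.inv (SLetter.t m) then
          b ⟨s.1 - 1, by have := s.isLt; omega⟩ else 0) else 0) = 0 := by
      by_cases h2 : 0 < s.1
      · rw [dif_pos h2, if_neg]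
        rw [hlet (s.1 - 1) (by have := s.isLt; omega)]
        simp [SLetter.inv]
      · rw [dif_neg h2]
    rw [hB, add_zero]
  have keyE : ∀ (m : ZMod 3) (s : Fin (w.length + 1)),
      φ₀ (eL k r κ m • b s) = eL k r κ m • φ₀ (b s) := by
    intro m s
    rw [hM.1 m s]
    by_cases hvm : vtxAt v₀ w s.1 = m
    · rw [if_pos hvm, hφb s, hf]
      simp only
      by_cases hd : s.1 + 3 ≤ w.length
      · rw [dif_pos hd, hM.1 m ⟨s.1 + 3, by omega⟩]
        have hcond : vtxAt v₀ w (s.1 + 3) = m := by rw [h3 s.1 hd]; exact hvm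
        rw [if_pos hcond]
      · rw [dif_neg hd, smul_zero]
    · rw [if_neg hvm, map_zero, hφb s, hf]
      simp only
      by_cases hd : s.1 + 3 ≤ w.length
      · rw [dif_pos hd, hM.1 m ⟨s.1 + 3, by omega⟩, if_neg]
        intro hx
        exact hvm (by rw [← h3 s.1 hd]; exact hx)
      · rw [dif_neg hd, smul_zero]
  have keyZ : ∀ (m : ZMod 3) (s : Fin (w.length + 1)),
      φ₀ (zL k r κ m • b s) = zL k r κ m • φ₀ (b s) := by
    intro m s
    rw [hzb m s, map_zero, hφb s, hf]
    simp only
    by_cases hd : s.1 + 3 ≤ w.length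
    · rw [dif_pos hd, hzb m ⟨s.1 + 3, by omega⟩]
    · rw [dif_neg hd, smul_zero]
  have keyT : ∀ (m : ZMod 3) (s : Fin (w.length + 1)),
      φ₀ (tL k r κ m • b s) = tL k r κ m • φ₀ (b s) := by
    intro m s
    rw [htb m s]
    by_cases h1 : s.1 < w.length
    · rw [dif_pos h1]
      by_cases hla : w.get ⟨s.1, h1⟩ = SLetter.t m
      · rw [if_pos hla, hφb ⟨s.1 + 1, by omega⟩, hf]
        simp only
        rw [hφb s, hf]
        simp only
        by_cases hd : s.1 + 3 ≤ w.length
        · rw [dif_pos hd, htb m ⟨s.1 + 3, by omega⟩]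
          by_cases hd2 : s.1 + 3 < w.length
          · rw [dif_pos hd2]
            have hl2 : w.get ⟨s.1 + 3, hd2⟩ = SLetter.t m := by
              rw [hsame s.1 hd2]
              exact hla
            rw [if_pos hl2, dif_pos (show s.1 + 1 + 3 ≤ w.length by omega)]
          · rw [dif_neg hd2, dif_neg (show ¬(s.1 + 1 + 3 ≤ w.length) by omega)]
        · rw [dif_neg hd, smul_zero, dif_neg (show ¬(s.1 + 1 + 3 ≤ w.length) by omega)]
      · rw [if_neg hla, map_zero, hφb s, hf]
        simp only
        by_cases hd : s.1 + 3 ≤ w.length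
        · rw [dif_pos hd, htb m ⟨s.1 + 3, by omega⟩]
          by_cases hd2 : s.1 + 3 < w.length
          · rw [dif_pos hd2, if_neg]
            intro hx
            apply hla
            rw [← hsame s.1 hd2]
            exact hx
          · rw [dif_neg hd2]
        · rw [dif_neg hd, smul_zero]
    · rw [dif_neg h1, map_zero, hφb s, hf]
      simp only
      rw [dif_neg (show ¬(s.1 + 3 ≤ w.length) by have := s.isLt; omega), smul_zero]
  refine ⟨mkEnd k b φ₀ keyE keyZ keyT, ?_⟩
  intro c
  by_cases hc : c = 0
  · refine ⟨b ⟨0, by omega⟩, ?_⟩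
    show φ₀ (b ⟨0, by omega⟩) ≠ c • b ⟨0, by omega⟩
    rw [hφb, hf, hc]
    simp only [zero_smul]
    rw [dif_pos (show (0 : ℕ) + 3 ≤ w.length by omega)]
    exact b.ne_zero _
  · refine ⟨b ⟨w.length, by omega⟩, ?_⟩
    show φ₀ (b ⟨w.length, by omega⟩) ≠ c • b ⟨w.length, by omega⟩
    rw [hφb, hf]
    simp only
    rw [dif_neg (show ¬(w.length + 3 ≤ w.length) by omega)]
    intro h0
    exact (smul_ne_zero hc (b.ne_zero _)) h0.symm

end EndoB

section EndoB'

variable {r : ZMod 3 → ℕ} {κ : ℕ} {v₀ : ZMod 3} {w : List SLetter}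
variable {M : Type} [AddCommGroup M] [Module k M] [Module (Lam k r κ) M]
  [IsScalarTower k (Lam k r κ) M]

set_option maxHeartbeats 2000000 in
theorem caseB'_endo (b : Module.Basis (Fin (w.length + 1)) k M) (hS : IsString r κ v₀ w)
    (hM : IsStringModule r κ v₀ w M b) (hn : 3 ≤ w.length)
    (hlet : ∀ (s : ℕ) (h : s < w.length), w.get ⟨s, h⟩ = SLetter.ti (vtxAt v₀ w (s + 1))) :
    ∃ φ : Module.End (Lam k r κ) M, ∀ c : k, ∃ x, φ x ≠ c • x := by
  classical
  have hstep : ∀ (s : ℕ) (h : s < w.length),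
      vtxAt v₀ w s = vtxAt v₀ w (s + 1) + 1 := by
    intro s h
    rw [← src_get hS s h, hlet s h]
    rfl
  have e3 : ∀ a : ZMod 3, a + 1 + 1 + 1 = a := by decide
  have h3 : ∀ s, s + 3 ≤ w.length → vtxAt v₀ w (s + 3) = vtxAt v₀ w s := by
    intro s hs3
    have e1 := hstep s (by omega)
    have e2 := hstep (s + 1) (by omega)
    have e4 := hstep (s + 2) (by omega)
    have g2 : vtxAt v₀ w (s + 1 + 1) = vtxAt v₀ w (s + 2) := congrArg _ (by omega)
    have g3 : vtxAt v₀ w (s + 2 + 1) = vtxAt v₀ w (s + 3) := congrArg _ (by omega)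
    rw [e1, e2, g2, e4, g3]
    exact (e3 _).symm
  have hsame : ∀ (s : ℕ) (h : s + 3 < w.length),
      w.get ⟨s + 3, h⟩ = w.get ⟨s, by omega⟩ := by
    intro s h
    rw [hlet (s + 3) h, hlet s (by omega)]
    rw [show vtxAt v₀ w (s + 3 + 1) = vtxAt v₀ w (s + 1 + 3) from congrArg _ (by omega),
      h3 (s + 1) (by omega)]
  set f : Fin (w.length + 1) → M := fun s =>
    if h : 3 ≤ s.1 then b ⟨s.1 - 3, by have := s.isLt; omega⟩ else 0 with hf
  set φ₀ : M →ₗ[k] M := b.constr k f with hφ₀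
  have hφb : ∀ s, φ₀ (b s) = f s := fun s => b.constr_basis k f s
  have hzb : ∀ (m : ZMod 3) (s : Fin (w.length + 1)), zL k r κ m • b s = 0 := by
    intro m s
    rw [hM.2.1 m s, expectedSMul]
    have hB : (if h : 0 < s.1 then
        (if w.get ⟨s.1 - 1, by have := s.isLt; omega⟩ = SLetter.inv (SLetter.z m) then
          b ⟨s.1 - 1, by have := s.isLt; omega⟩ else 0) else 0) = 0 := by
      by_cases h2 : 0 < s.1
      · rw [dif_pos h2, if_neg]
        rw [hlet (s.1 - 1) (by have := s.isLt; omega)]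
        simp [SLetter.inv]
      · rw [dif_neg h2]
    rw [hB, add_zero]
    by_cases h1 : s.1 < w.length
    · rw [dif_pos h1, if_neg]
      rw [hlet s.1 h1]
      simp
    · rw [dif_neg h1]
  have htb : ∀ (m : ZMod 3) (s : Fin (w.length + 1)), tL k r κ m • b s =
      (if h : 0 < s.1 then
        (if w.get ⟨s.1 - 1, by have := s.isLt; omega⟩ = SLetter.inv (SLetter.t m) then
          b ⟨s.1 - 1, by have := s.isLt; omega⟩ else 0) else 0) := by
    intro m s
    rw [hM.2.2 m s, expectedSMul]
    have hA : (if h : s.1 < w.length then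
        (if w.get ⟨s.1, h⟩ = SLetter.t m then b ⟨s.1 + 1, by omega⟩ else 0) else 0) = 0 := by
      by_cases h1 : s.1 < w.length
      · rw [dif_pos h1, if_neg]
        rw [hlet s.1 h1]
        simp
      · rw [dif_neg h1]
    rw [hA, zero_add]
  have keyE : ∀ (m : ZMod 3) (s : Fin (w.length + 1)),
      φ₀ (eL k r κ m • b s) = eL k r κ m • φ₀ (b s) := by
    intro m s
    have hv3 : ∀ h : 3 ≤ s.1, vtxAt v₀ w (s.1 - 3) = vtxAt v₀ w s.1 := by
      intro h
      have g := h3 (s.1 - 3) (by have := s.isLt; omega)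
      rw [show s.1 - 3 + 3 = s.1 from by omega] at g
      exact g.symm
    rw [hM.1 m s]
    by_cases hvm : vtxAt v₀ w s.1 = m
    · rw [if_pos hvm, hφb s, hf]
      simp only
      by_cases hd : 3 ≤ s.1
      · rw [dif_pos hd, hM.1 m ⟨s.1 - 3, by have := s.isLt; omega⟩]
        have hcond : vtxAt v₀ w (s.1 - 3) = m := by rw [hv3 hd]; exact hvm
        rw [if_pos hcond]
      · rw [dif_neg hd, smul_zero]
    · rw [if_neg hvm, map_zero, hφb s, hf]
      simp only
      by_cases hd : 3 ≤ s.1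
      · rw [dif_pos hd, hM.1 m ⟨s.1 - 3, by have := s.isLt; omega⟩, if_neg]
        intro hx
        exact hvm (by rw [← hv3 hd]; exact hx)
      · rw [dif_neg hd, smul_zero]
  have keyZ : ∀ (m : ZMod 3) (s : Fin (w.length + 1)),
      φ₀ (zL k r κ m • b s) = zL k r κ m • φ₀ (b s) := by
    intro m s
    rw [hzb m s, map_zero, hφb s, hf]
    simp only
    by_cases hd : 3 ≤ s.1
    · rw [dif_pos hd, hzb m ⟨s.1 - 3, by have := s.isLt; omega⟩]
    · rw [dif_neg hd, smul_zero]
  have keyT : ∀ (m : ZMod 3) (s : Fin (w.length + 1)),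
      φ₀ (tL k r κ m • b s) = tL k r κ m • φ₀ (b s) := by
    intro m s
    rw [htb m s]
    by_cases h2 : 0 < s.1
    · rw [dif_pos h2]
      by_cases hy : w.get ⟨s.1 - 1, by have := s.isLt; omega⟩ = SLetter.inv (SLetter.t m)
      · rw [if_pos hy, hφb ⟨s.1 - 1, by have := s.isLt; omega⟩, hf]
        simp only
        rw [hφb s, hf]
        simp only
        by_cases hd : 3 ≤ s.1
        · rw [dif_pos hd, htb m ⟨s.1 - 3, by have := s.isLt; omega⟩]
          simp only [Fin.val_mk]
          by_cases hd2 : 0 < s.1 - 3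
          · rw [dif_pos hd2]
            have hs4 : s.1 - 4 + 3 < w.length := by have := s.isLt; omega
            have hl2 : w.get ⟨s.1 - 3 - 1, by have := s.isLt; omega⟩
                = SLetter.inv (SLetter.t m) := by
              have g := hsame (s.1 - 4) hs4
              have g1 : w.get ⟨s.1 - 4 + 3, hs4⟩ = SLetter.inv (SLetter.t m) := by
                have e : s.1 - 4 + 3 = s.1 - 1 := by omega
                simp only [e]
                exact hy
              have g2 : w.get ⟨s.1 - 4, by omega⟩ = SLetter.inv (SLetter.t m) := by
                rw [← g]; exact g1
              have e2 : s.1 - 3 - 1 = s.1 - 4 := by omega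
              simp only [e2]
              exact g2
            rw [if_pos hl2, dif_pos (show 3 ≤ s.1 - 1 by omega)]
            have e4 : s.1 - 1 - 3 = s.1 - 3 - 1 := by omega
            simp only [e4]
          · rw [dif_neg hd2, dif_neg (show ¬(3 ≤ s.1 - 1) by omega)]
        · rw [dif_neg hd, smul_zero, dif_neg (show ¬(3 ≤ s.1 - 1) by omega)]
      · rw [if_neg hy, map_zero, hφb s, hf]
        simp only
        by_cases hd : 3 ≤ s.1
        · rw [dif_pos hd, htb m ⟨s.1 - 3, by have := s.isLt; omega⟩]
          simp only [Fin.val_mk]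
          by_cases hd2 : 0 < s.1 - 3
          · rw [dif_pos hd2, if_neg]
            intro hx
            apply hy
            have hs4 : s.1 - 4 + 3 < w.length := by have := s.isLt; omega
            have g := hsame (s.1 - 4) hs4
            have e1 : s.1 - 1 = s.1 - 4 + 3 := by omega
            simp only [e1]
            rw [g]
            have e2 : s.1 - 3 - 1 = s.1 - 4 := by omega
            simp only [e2] at hx
            exact hx
          · rw [dif_neg hd2]
        · rw [dif_neg hd, smul_zero]
    · rw [dif_neg h2, map_zero, hφb s, hf]
      simp only
      rw [dif_neg (show ¬(3 ≤ s.1) by omega), smul_zero]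
  refine ⟨mkEnd k b φ₀ keyE keyZ keyT, ?_⟩
  intro c
  by_cases hc : c = 0
  · refine ⟨b ⟨3, by omega⟩, ?_⟩
    show φ₀ (b ⟨3, by omega⟩) ≠ c • b ⟨3, by omega⟩
    rw [hφb, hf, hc]
    simp only [zero_smul]
    rw [dif_pos (show (3 : ℕ) ≤ 3 by omega)]
    exact b.ne_zero _
  · refine ⟨b ⟨0, by omega⟩, ?_⟩
    show φ₀ (b ⟨0, by omega⟩) ≠ c • b ⟨0, by omega⟩
    rw [hφb, hf]
    simp only
    rw [dif_neg (show ¬((3 : ℕ) ≤ 0) by omega)]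
    intro h0
    exact (smul_ne_zero hc (b.ne_zero _)) h0.symm

end EndoB'

section Scalars

variable {r : ZMod 3 → ℕ} {κ : ℕ}
variable {M : Type} [AddCommGroup M] [Module k M] [Module (Lam k r κ) M]
  [IsScalarTower k (Lam k r κ) M]

theorem scalar_anchor {n : ℕ} (b : Module.Basis (Fin (n + 1)) k M) (i : ZMod 3) (q0 : Fin (n + 1))
    (hact : ∀ s : Fin (n + 1), eL k r κ i • b s = if s = q0 then b s else 0)
    (φ : Module.End (Lam k r κ) M) :
    φ (b q0) = (b.repr (φ (b q0)) q0) • b q0 := by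
  classical
  haveI := IsScalarTower.to_smulCommClass (R := k) (A := Lam k r κ) (M := M)
  have h2 : ∀ x : M, eL k r κ i • x = (b.repr x q0) • b q0 := by
    intro x
    conv_lhs => rw [← b.sum_repr x]
    rw [Finset.smul_sum]
    rw [Finset.sum_eq_single q0]
    · rw [smul_comm, hact q0, if_pos rfl]
    · intro s _ hsne
      rw [smul_comm, hact s, if_neg hsne, smul_zero]
    · intro hmem
      exact absurd (Finset.mem_univ q0) hmem
  have h1 : φ (eL k r κ i • b q0) = eL k r κ i • φ (b q0) := map_smul φ _ _
  rw [hact q0, if_pos rfl] at h1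
  rw [h2 (φ (b q0))] at h1
  exact h1

theorem allScalar_nil (b : Module.Basis (Fin (([] : List SLetter).length + 1)) k M) :
    Nonempty (Module.End (Lam k r κ) M ≃+* k) := by
  apply iso_of_all_scalar k b
  intro φ
  refine ⟨b.repr (φ (b 0)) 0, ?_⟩
  have hall : endRes k φ = (b.repr (φ (b 0)) 0) • (LinearMap.id : M →ₗ[k] M) := by
    apply b.ext
    intro s
    have hs : s = 0 := by
      rcases s with ⟨sv, hsv⟩
      have : sv < 1 := by simpa using hsv
      have : sv = 0 := by omega
      subst this
      rfl
    subst hs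
    show φ (b 0) = (b.repr (φ (b 0)) 0) • b 0
    conv_lhs => rw [← b.sum_repr (φ (b 0))]
    rw [Finset.sum_eq_single (0 : Fin (([] : List SLetter).length + 1))]
    · intro s _ hne
      exfalso
      apply hne
      rcases s with ⟨sv, hsv⟩
      have h2 : sv < 1 := by simpa using hsv
      have h3 : sv = 0 := by omega
      subst h3
      rfl
    · intro hmem
      exact absurd (Finset.mem_univ _) hmem
  intro x
  exact DFunLike.congr_fun hall x

theorem allScalar_t (i : ZMod 3)
    (b : Module.Basis (Fin ([SLetter.t i].length + 1)) k M)
    (hM : IsStringModule r κ i [SLetter.t i] M b) :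
    Nonempty (Module.End (Lam k r κ) M ≃+* k) := by
  classical
  haveI := IsScalarTower.to_smulCommClass (R := k) (A := Lam k r κ) (M := M)
  apply iso_of_all_scalar k b
  intro φ
  have hni : ∀ a : ZMod 3, ¬(a + 1 = a) := by decide
  have hact : ∀ s, eL k r κ i • b s = if s = ⟨0, by norm_num⟩ then b s else 0 := by
    intro s
    rw [hM.1 i s]
    rcases s with ⟨sv, hsv⟩
    have hsv' : sv < 2 := by simpa using hsv
    interval_cases sv
    · have e1 : vtxAt i [SLetter.t i] ((⟨0, hsv⟩ : Fin ([SLetter.t i].length + 1)) : ℕ) = i := rfl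
      have e2 : (⟨0, hsv⟩ : Fin ([SLetter.t i].length + 1)) = ⟨0, by norm_num⟩ := rfl
      rw [if_pos e1, if_pos e2]
    · have e1 : ¬(vtxAt i [SLetter.t i] ((⟨1, hsv⟩ : Fin ([SLetter.t i].length + 1)) : ℕ) = i) :=
        hni i
      have c2 : ¬((⟨1, hsv⟩ : Fin ([SLetter.t i].length + 1)) = ⟨0, by norm_num⟩) := by
        intro hx
        have h3 : (1 : ℕ) = 0 := congrArg Fin.val hx
        exact absurd h3 (by norm_num)
      rw [if_neg e1, if_neg c2]
  have h0 := scalar_anchor k b i ⟨0, by norm_num⟩ hact φ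
  set c := b.repr (φ (b ⟨0, by norm_num⟩)) ⟨0, by norm_num⟩ with hc
  have htact : tL k r κ i • b ⟨0, by norm_num⟩ = b ⟨1, by norm_num⟩ := by
    rw [hM.2.2 i ⟨0, by norm_num⟩, expectedSMul]
    norm_num
  have h1 : φ (b ⟨1, by norm_num⟩) = c • b ⟨1, by norm_num⟩ := by
    rw [← htact, map_smul, h0, smul_comm, htact]
  refine ⟨c, ?_⟩
  have hall : endRes k φ = c • (LinearMap.id : M →ₗ[k] M) := by
    apply b.ext
    intro s
    rcases s with ⟨sv, hsv⟩
    have hsv' : sv < 2 := by simpa using hsv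
    interval_cases sv
    · exact h0
    · exact h1
  intro x
  exact DFunLike.congr_fun hall x

theorem allScalar_ti (i : ZMod 3)
    (b : Module.Basis (Fin ([SLetter.ti i].length + 1)) k M)
    (hM : IsStringModule r κ (i + 1) [SLetter.ti i] M b) :
    Nonempty (Module.End (Lam k r κ) M ≃+* k) := by
  classical
  haveI := IsScalarTower.to_smulCommClass (R := k) (A := Lam k r κ) (M := M)
  apply iso_of_all_scalar k b
  intro φ
  have hni : ∀ a : ZMod 3, ¬(a + 1 = a) := by decide
  have hact : ∀ s, eL k r κ i • b s = if s = ⟨1, by norm_num⟩ then b s else 0 := by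
    intro s
    rw [hM.1 i s]
    rcases s with ⟨sv, hsv⟩
    have hsv' : sv < 2 := by simpa using hsv
    interval_cases sv
    · have e1 : ¬(vtxAt (i + 1) [SLetter.ti i]
          ((⟨0, hsv⟩ : Fin ([SLetter.ti i].length + 1)) : ℕ) = i) := hni i
      have c2 : ¬((⟨0, hsv⟩ : Fin ([SLetter.ti i].length + 1)) = ⟨1, by norm_num⟩) := by
        intro hx
        have h3 : (0 : ℕ) = 1 := congrArg Fin.val hx
        exact absurd h3 (by norm_num)
      rw [if_neg e1, if_neg c2]
    · have e1 : vtxAt (i + 1) [SLetter.ti i]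
          ((⟨1, hsv⟩ : Fin ([SLetter.ti i].length + 1)) : ℕ) = i := rfl
      have e2 : (⟨1, hsv⟩ : Fin ([SLetter.ti i].length + 1)) = ⟨1, by norm_num⟩ := rfl
      rw [if_pos e1, if_pos e2]
  have h1 := scalar_anchor k b i ⟨1, by norm_num⟩ hact φ
  set c := b.repr (φ (b ⟨1, by norm_num⟩)) ⟨1, by norm_num⟩ with hc
  have htact : tL k r κ i • b ⟨1, by norm_num⟩ = b ⟨0, by norm_num⟩ := by
    rw [hM.2.2 i ⟨1, by norm_num⟩, expectedSMul]
    norm_num [SLetter.inv]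
  have h0 : φ (b ⟨0, by norm_num⟩) = c • b ⟨0, by norm_num⟩ := by
    rw [← htact, map_smul, h1, smul_comm, htact]
  refine ⟨c, ?_⟩
  have hall : endRes k φ = c • (LinearMap.id : M →ₗ[k] M) := by
    apply b.ext
    intro s
    rcases s with ⟨sv, hsv⟩
    have hsv' : sv < 2 := by simpa using hsv
    interval_cases sv
    · exact h0
    · exact h1
  intro x
  exact DFunLike.congr_fun hall x

theorem allScalar_tt (i : ZMod 3)
    (b : Module.Basis (Fin ([SLetter.t i, SLetter.t (i + 1)].length + 1)) k M)
    (hM : IsStringModule r κ i [SLetter.t i, SLetter.t (i + 1)] M b) :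
    Nonempty (Module.End (Lam k r κ) M ≃+* k) := by
  classical
  haveI := IsScalarTower.to_smulCommClass (R := k) (A := Lam k r κ) (M := M)
  apply iso_of_all_scalar k b
  intro φ
  have hni : ∀ a : ZMod 3, ¬(a + 1 = a) := by decide
  have hni2 : ∀ a : ZMod 3, ¬(a + 1 + 1 = a) := by decide
  have hact : ∀ s, eL k r κ i • b s = if s = ⟨0, by norm_num⟩ then b s else 0 := by
    intro s
    rw [hM.1 i s]
    rcases s with ⟨sv, hsv⟩
    have hsv' : sv < 3 := by simpa using hsv
    interval_cases sv
    · have e1 : vtxAt i [SLetter.t i, SLetter.t (i + 1)]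
          ((⟨0, hsv⟩ : Fin ([SLetter.t i, SLetter.t (i + 1)].length + 1)) : ℕ) = i := rfl
      have e2 : (⟨0, hsv⟩ : Fin ([SLetter.t i, SLetter.t (i + 1)].length + 1))
          = ⟨0, by norm_num⟩ := rfl
      rw [if_pos e1, if_pos e2]
    · have e1 : ¬(vtxAt i [SLetter.t i, SLetter.t (i + 1)]
          ((⟨1, hsv⟩ : Fin ([SLetter.t i, SLetter.t (i + 1)].length + 1)) : ℕ) = i) := hni i
      have c2 : ¬((⟨1, hsv⟩ : Fin ([SLetter.t i, SLetter.t (i + 1)].length + 1))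
          = ⟨0, by norm_num⟩) := by
        intro hx
        have h3 : (1 : ℕ) = 0 := congrArg Fin.val hx
        exact absurd h3 (by norm_num)
      rw [if_neg e1, if_neg c2]
    · have e1 : ¬(vtxAt i [SLetter.t i, SLetter.t (i + 1)]
          ((⟨2, hsv⟩ : Fin ([SLetter.t i, SLetter.t (i + 1)].length + 1)) : ℕ) = i) := hni2 i
      have c2 : ¬((⟨2, hsv⟩ : Fin ([SLetter.t i, SLetter.t (i + 1)].length + 1))
          = ⟨0, by norm_num⟩) := by
        intro hx
        have h3 : (2 : ℕ) = 0 := congrArg Fin.val hx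
        exact absurd h3 (by norm_num)
      rw [if_neg e1, if_neg c2]
  have h0 := scalar_anchor k b i ⟨0, by norm_num⟩ hact φ
  set c := b.repr (φ (b ⟨0, by norm_num⟩)) ⟨0, by norm_num⟩ with hc
  have htact0 : tL k r κ i • b ⟨0, by norm_num⟩ = b ⟨1, by norm_num⟩ := by
    rw [hM.2.2 i ⟨0, by norm_num⟩, expectedSMul]
    norm_num [SLetter.inv]
  have htact1 : tL k r κ (i + 1) • b ⟨1, by norm_num⟩ = b ⟨2, by norm_num⟩ := by
    rw [hM.2.2 (i + 1) ⟨1, by norm_num⟩, expectedSMul]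
    norm_num [SLetter.inv]
    intro hx
    cases hx
  have h1 : φ (b ⟨1, by norm_num⟩) = c • b ⟨1, by norm_num⟩ := by
    rw [← htact0, map_smul, h0, smul_comm, htact0]
  have h2 : φ (b ⟨2, by norm_num⟩) = c • b ⟨2, by norm_num⟩ := by
    rw [← htact1, map_smul, h1, smul_comm, htact1]
  refine ⟨c, ?_⟩
  have hall : endRes k φ = c • (LinearMap.id : M →ₗ[k] M) := by
    apply b.ext
    intro s
    rcases s with ⟨sv, hsv⟩
    have hsv' : sv < 3 := by simpa using hsv
    interval_cases sv
    · exact h0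
    · exact h1
    · exact h2
  intro x
  exact DFunLike.congr_fun hall x

theorem allScalar_titi (i : ZMod 3)
    (b : Module.Basis (Fin ([SLetter.ti (i + 1), SLetter.ti i].length + 1)) k M)
    (hM : IsStringModule r κ (i + 2) [SLetter.ti (i + 1), SLetter.ti i] M b) :
    Nonempty (Module.End (Lam k r κ) M ≃+* k) := by
  classical
  haveI := IsScalarTower.to_smulCommClass (R := k) (A := Lam k r κ) (M := M)
  apply iso_of_all_scalar k b
  intro φ
  have hni : ∀ a : ZMod 3, ¬(a + 1 = a) := by decide
  have hni2 : ∀ a : ZMod 3, ¬(a + 2 = a) := by decide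
  have hact : ∀ s, eL k r κ i • b s = if s = ⟨2, by norm_num⟩ then b s else 0 := by
    intro s
    rw [hM.1 i s]
    rcases s with ⟨sv, hsv⟩
    have hsv' : sv < 3 := by simpa using hsv
    interval_cases sv
    · have e1 : ¬(vtxAt (i + 2) [SLetter.ti (i + 1), SLetter.ti i]
          ((⟨0, hsv⟩ : Fin ([SLetter.ti (i + 1), SLetter.ti i].length + 1)) : ℕ) = i) := hni2 i
      have c2 : ¬((⟨0, hsv⟩ : Fin ([SLetter.ti (i + 1), SLetter.ti i].length + 1))
          = ⟨2, by norm_num⟩) := by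
        intro hx
        have h3 : (0 : ℕ) = 2 := congrArg Fin.val hx
        exact absurd h3 (by norm_num)
      rw [if_neg e1, if_neg c2]
    · have e1 : ¬(vtxAt (i + 2) [SLetter.ti (i + 1), SLetter.ti i]
          ((⟨1, hsv⟩ : Fin ([SLetter.ti (i + 1), SLetter.ti i].length + 1)) : ℕ) = i) := hni i
      have c2 : ¬((⟨1, hsv⟩ : Fin ([SLetter.ti (i + 1), SLetter.ti i].length + 1))
          = ⟨2, by norm_num⟩) := by
        intro hx
        have h3 : (1 : ℕ) = 2 := congrArg Fin.val hx
        exact absurd h3 (by norm_num)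
      rw [if_neg e1, if_neg c2]
    · have e1 : vtxAt (i + 2) [SLetter.ti (i + 1), SLetter.ti i]
          ((⟨2, hsv⟩ : Fin ([SLetter.ti (i + 1), SLetter.ti i].length + 1)) : ℕ) = i := rfl
      have e2 : (⟨2, hsv⟩ : Fin ([SLetter.ti (i + 1), SLetter.ti i].length + 1))
          = ⟨2, by norm_num⟩ := rfl
      rw [if_pos e1, if_pos e2]
  have h2 := scalar_anchor k b i ⟨2, by norm_num⟩ hact φ
  set c := b.repr (φ (b ⟨2, by norm_num⟩)) ⟨2, by norm_num⟩ with hc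
  have htact2 : tL k r κ i • b ⟨2, by norm_num⟩ = b ⟨1, by norm_num⟩ := by
    rw [hM.2.2 i ⟨2, by norm_num⟩, expectedSMul]
    norm_num [SLetter.inv]
  have htact1 : tL k r κ (i + 1) • b ⟨1, by norm_num⟩ = b ⟨0, by norm_num⟩ := by
    rw [hM.2.2 (i + 1) ⟨1, by norm_num⟩, expectedSMul]
    norm_num [SLetter.inv]
    intro hx
    cases hx
  have h1 : φ (b ⟨1, by norm_num⟩) = c • b ⟨1, by norm_num⟩ := by
    rw [← htact2, map_smul, h2, smul_comm, htact2]
  have h0 : φ (b ⟨0, by norm_num⟩) = c • b ⟨0, by norm_num⟩ := by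
    rw [← htact1, map_smul, h1, smul_comm, htact1]
  refine ⟨c, ?_⟩
  have hall : endRes k φ = c • (LinearMap.id : M →ₗ[k] M) := by
    apply b.ext
    intro s
    rcases s with ⟨sv, hsv⟩
    have hsv' : sv < 3 := by simpa using hsv
    interval_cases sv
    · exact h0
    · exact h1
    · exact h2
  intro x
  exact DFunLike.congr_fun hall x

end Scalars

section Classify

variable {r : ZMod 3 → ℕ} {κ : ℕ} {v₀ : ZMod 3} {w : List SLetter}

theorem classify (hS : IsString r κ v₀ w) :
    w = [] ∨
    (∃ (s : ℕ) (h : s < w.length) (j : ZMod 3),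
        w.get ⟨s, h⟩ = SLetter.z j ∨ w.get ⟨s, h⟩ = SLetter.zi j) ∨
    (∀ (s : ℕ) (h : s < w.length), w.get ⟨s, h⟩ = SLetter.t (vtxAt v₀ w s)) ∨
    (∀ (s : ℕ) (h : s < w.length), w.get ⟨s, h⟩ = SLetter.ti (vtxAt v₀ w (s + 1))) := by
  classical
  by_cases h0 : w = []
  · exact Or.inl h0
  by_cases h1 : ∃ (s : ℕ) (h : s < w.length) (j : ZMod 3),
      w.get ⟨s, h⟩ = SLetter.z j ∨ w.get ⟨s, h⟩ = SLetter.zi j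
  · exact Or.inr (Or.inl h1)
  push_neg at h1
  have hkind : ∀ (s : ℕ) (h : s < w.length),
      (∃ m, w.get ⟨s, h⟩ = SLetter.t m) ∨ (∃ m, w.get ⟨s, h⟩ = SLetter.ti m) := by
    intro s h
    rcases e : w.get ⟨s, h⟩ with m | m | m | m
    · exact absurd e (h1 s h m).1
    · exact absurd e (h1 s h m).2
    · exact Or.inl ⟨m, rfl⟩
    · exact Or.inr ⟨m, rfl⟩
  have hpropT : ∀ (s : ℕ) (h : s + 1 < w.length),
      (∃ m, w.get ⟨s, by omega⟩ = SLetter.t m) → ∃ m, w.get ⟨s + 1, h⟩ = SLetter.t m := by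
    intro s h ⟨m, hm⟩
    rcases hkind (s + 1) h with h2 | ⟨m', hm'⟩
    · exact h2
    · exfalso
      have hc := hch hS s h
      rw [hm, hm'] at hc
      have hm2 : m' = m := by
        have : m + 1 = m' + 1 := hc
        have h3 := congrArg (fun x => x - 1) this
        simpa using h3.symm
      have hr := hred hS s h
      rw [hm, hm'] at hr
      exact hr (by rw [hm2]; rfl)
  have hpropTi : ∀ (s : ℕ) (h : s + 1 < w.length),
      (∃ m, w.get ⟨s, by omega⟩ = SLetter.ti m) → ∃ m, w.get ⟨s + 1, h⟩ = SLetter.ti m := by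
    intro s h ⟨m, hm⟩
    rcases hkind (s + 1) h with ⟨m', hm'⟩ | h2
    · exfalso
      have hc := hch hS s h
      rw [hm, hm'] at hc
      have hm2 : m' = m := hc.symm
      have hr := hred hS s h
      rw [hm, hm'] at hr
      exact hr (by rw [hm2]; rfl)
    · exact h2
  have hlen : 0 < w.length := by
    cases w with
    | nil => exact absurd rfl h0
    | cons a l => simp
  rcases hkind 0 hlen with hT0 | hTi0
  · -- all letters are t
    have hallT : ∀ (s : ℕ) (h : s < w.length), ∃ m, w.get ⟨s, h⟩ = SLetter.t m := by
      intro s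
      induction s with
      | zero => intro h; exact hT0
      | succ u ih => intro h; exact hpropT u h (ih (by omega))
    refine Or.inr (Or.inr (Or.inl ?_))
    intro s h
    obtain ⟨m, hm⟩ := hallT s h
    have := src_get hS s h
    rw [hm] at this
    rw [hm, show m = vtxAt v₀ w s from this]
  · have hallTi : ∀ (s : ℕ) (h : s < w.length), ∃ m, w.get ⟨s, h⟩ = SLetter.ti m := by
      intro s
      induction s with
      | zero => intro h; exact hTi0
      | succ u ih => intro h; exact hpropTi u h (ih (by omega))
    refine Or.inr (Or.inr (Or.inr ?_))
    intro s h
    obtain ⟨m, hm⟩ := hallTi s h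
    have := vtx_succ v₀ w s h
    rw [hm] at this
    rw [hm, show m = vtxAt v₀ w (s + 1) from this.symm]

end Classify

/-- For `Λ = kQ/I_{(r₀,r₁,r₂,κ)}` with `r_i ≥ 2`, `κ ≥ 1` over an
algebraically closed field, a string module `M[S]` has endomorphism ring isomorphic to
`k` if and only if the string `S` is equivalent, for some vertex `i`, to the trivial
string `1_i`, to the arrow `τ_i`, or to the path `τ_{i+1}τ_i`. -/
theorem string_module_end_iso_k_iff (hk : IsAlgClosed k) (r : ZMod 3 → ℕ) (κ : ℕ)
    (hr : ∀ i, 2 ≤ r i) (hκ : 1 ≤ κ) (v₀ : ZMod 3) (w : List SLetter)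
    (hS : IsString r κ v₀ w) (M : Type) [AddCommGroup M] [Module k M]
    [Module (Lam k r κ) M] [IsScalarTower k (Lam k r κ) M]
    (b : Module.Basis (Fin (w.length + 1)) k M) (hM : IsStringModule r κ v₀ w M b) :
    Nonempty (Module.End (Lam k r κ) M ≃+* k) ↔
      ∃ i : ZMod 3,
        StringEquiv v₀ w i [] ∨
        StringEquiv v₀ w i [SLetter.t i] ∨
        StringEquiv v₀ w i [SLetter.t i, SLetter.t (i + 1)] := by
  constructor
  · intro hne
    by_contra hR
    rcases classify hS with h0 | ⟨s, hs, j, hzz⟩ | hT | hTi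
    · exact hR ⟨v₀, Or.inl (Or.inl ⟨rfl, h0⟩)⟩
    · obtain ⟨p, q, hpq, hv, ht1, ht2, hs1, hs2⟩ := caseA_comb hS j s hs hzz
      obtain ⟨φ, hφ⟩ := caseA_endo k b hM p q hpq hv ht1 ht2 hs1 hs2
      exact no_iso_of_nonscalar k hk b φ hφ hne
    · by_cases hlen : 3 ≤ w.length
      · obtain ⟨φ, hφ⟩ := caseB_endo k b hM hlen hT
        exact no_iso_of_nonscalar k hk b φ hφ hne
      · apply hR
        clear hM hne
        cases w with
        | nil => exact ⟨v₀, Or.inl (Or.inl ⟨rfl, rfl⟩)⟩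
        | cons a tl =>
          cases tl with
          | nil =>
            have h1 : a = SLetter.t v₀ := hT 0 (by simp)
            refine ⟨v₀, Or.inr (Or.inl (Or.inl ⟨rfl, ?_⟩))⟩
            rw [h1]
          | cons a2 tl2 =>
            cases tl2 with
            | nil =>
              have h1 : a = SLetter.t v₀ := hT 0 (by simp)
              have h2 : a2 = SLetter.t (vtxAt v₀ [a, a2] 1) := hT 1 (by simp)
              have hv1 : vtxAt v₀ [a, a2] 1 = v₀ + 1 := by
                show a.tgt = v₀ + 1
                rw [h1]
                rfl
              refine ⟨v₀, Or.inr (Or.inr (Or.inl ⟨rfl, ?_⟩))⟩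
              rw [hv1] at h2
              rw [h1, h2]
            | cons a3 tl3 =>
              exfalso
              apply hlen
              show 3 ≤ (a :: a2 :: a3 :: tl3).length
              simp only [List.length_cons]
              omega
    · by_cases hlen : 3 ≤ w.length
      · obtain ⟨φ, hφ⟩ := caseB'_endo k b hS hM hlen hTi
        exact no_iso_of_nonscalar k hk b φ hφ hne
      · apply hR
        clear hM hne
        cases w with
        | nil => exact ⟨v₀, Or.inl (Or.inl ⟨rfl, rfl⟩)⟩
        | cons a tl =>
          cases tl with
          | nil =>
            have h1 : a = SLetter.ti (vtxAt v₀ [a] 1) := hTi 0 (by simp)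
            refine ⟨vtxAt v₀ [a] 1, Or.inr (Or.inl (Or.inr ⟨?_, ?_⟩))⟩
            · show vtxAt v₀ [a] 1 = endVtx v₀ [a]
              rfl
            · have e1 : a.inv = SLetter.t (vtxAt v₀ [a] 1) := congrArg SLetter.inv h1
              have hIW : invWord [a] = [a.inv] := rfl
              rw [hIW, e1]
          | cons a2 tl2 =>
            cases tl2 with
            | nil =>
              have h1 : a = SLetter.ti (vtxAt v₀ [a, a2] 1) := hTi 0 (by simp)
              have h2 : a2 = SLetter.ti (vtxAt v₀ [a, a2] 2) := hTi 1 (by simp)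
              have hc' : a.tgt = a2.src := hch hS 0 (by simp)
              have hv1 : vtxAt v₀ [a, a2] 1 = vtxAt v₀ [a, a2] 2 + 1 :=
                hc'.trans (congrArg SLetter.src h2)
              refine ⟨vtxAt v₀ [a, a2] 2, Or.inr (Or.inr (Or.inr ⟨?_, ?_⟩))⟩
              · show vtxAt v₀ [a, a2] 2 = endVtx v₀ [a, a2]
                rfl
              · have e1 : a.inv = SLetter.t (vtxAt v₀ [a, a2] 1) := congrArg SLetter.inv h1
                have e2 : a2.inv = SLetter.t (vtxAt v₀ [a, a2] 2) := congrArg SLetter.inv h2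
                have hIW : invWord [a, a2] = [a2.inv, a.inv] := rfl
                rw [hIW, e1, e2, hv1]
            | cons a3 tl3 =>
              exfalso
              apply hlen
              show 3 ≤ (a :: a2 :: a3 :: tl3).length
              simp only [List.length_cons]
              omega
  · rintro ⟨i, hcase | hcase | hcase⟩
    · rcases hcase with ⟨hv, hw⟩ | ⟨hv, hw⟩
      · subst hw
        exact allScalar_nil k b
      · have hw0 : w = [] := by
          cases w with
          | nil => rfl
          | cons a tl =>
            exfalso
            have hl := congrArg List.length hw
            simp [invWord] at hl
        subst hw0
        exact allScalar_nil k b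
    · rcases hcase with ⟨hv, hw⟩ | ⟨hv, hw⟩
      · subst hw
        subst hv
        exact allScalar_t k v₀ b hM
      · cases w with
        | nil =>
          exfalso
          have hl := congrArg List.length hw
          simp [invWord] at hl
        | cons a tl =>
          cases tl with
          | nil =>
            have hIW : invWord [a] = [a.inv] := rfl
            rw [hIW] at hw
            injection hw with h2 _
            have h3 := congrArg SLetter.inv h2
            rw [SLetter.inv_inv] at h3
            have ha : a = SLetter.ti i := h3.symm
            subst ha
            have h4 : i + 1 = v₀ := hS.1 (SLetter.ti i) rfl
            have hv0 : v₀ = i + 1 := h4.symm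
            subst hv0
            exact allScalar_ti k i b hM
          | cons a2 tl2 =>
            exfalso
            have hl := congrArg List.length hw
            simp [invWord] at hl
    · rcases hcase with ⟨hv, hw⟩ | ⟨hv, hw⟩
      · subst hw
        subst hv
        exact allScalar_tt k v₀ b hM
      · cases w with
        | nil =>
          exfalso
          have hl := congrArg List.length hw
          simp [invWord] at hl
        | cons a tl =>
          cases tl with
          | nil =>
            exfalso
            have hl := congrArg List.length hw
            simp [invWord] at hl
          | cons a2 tl2 =>
            cases tl2 with
            | nil =>
              have hIW : invWord [a, a2] = [a2.inv, a.inv] := rfl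
              rw [hIW] at hw
              injection hw with h2 h3
              injection h3 with h3 _
              have g2 := congrArg SLetter.inv h2
              rw [SLetter.inv_inv] at g2
              have ha2 : a2 = SLetter.ti i := g2.symm
              have g3 := congrArg SLetter.inv h3
              rw [SLetter.inv_inv] at g3
              have ha : a = SLetter.ti (i + 1) := g3.symm
              subst ha2
              subst ha
              have h4 : i + 1 + 1 = v₀ := hS.1 (SLetter.ti (i + 1)) rfl
              have e12 : (1 : ZMod 3) + 1 = 2 := by decide
              have hv0 : v₀ = i + 2 := by rw [← h4, add_assoc, e12]
              subst hv0
              exact allScalar_titi k i b hM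
            | cons a3 tl3 =>
              exfalso
              have hl := congrArg List.length hw
              simp [invWord] at hl
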